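/- Boundedness of the IPA iterates (Lemma 2, one-step form). Let n, b ≥ 1 and γ > 0. Let g_1,…,g_b : ℝ^n → ℝ be convex and Lipschitz continuous with constants L_1,…,L_b; set L := max{L_1,…,L_b} and g := (1/b)·Σ_{i=1}^b g_i. Let D : ℝ^n → ℝ^n be any map and define S(v) := D(v) − prox_{γg}(2·D(v) − v). Let v* ∈ ℝ^n satisfy S(v*) = 0 and set x* := D(v*). Fix any i ∈ {1,…,b} and any v ∈ ℝ^n, let x := D(v), z := prox_{γ g_i}(2x − v), and v⁺ := v + z − x. If ‖x − x*‖ ≤ R for some R ≥ 0, then ‖v⁺ − v*‖ ≤ R + 2γL. -/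

import Mathlib

/-!
Since `S v* = 0`, `x* = prox_{γg}(2x* − v*)`, so
`v⁺ − v* = (x − x*) + (z − (2x − v)) − (x* − (2x* − v*))`, and the last two terms are
displacements `prox_{γf} w − w` of proximal steps. For an `ℓ`-Lipschitz `f` such a displacement
has norm at most `γℓ`: comparing `prox_{γf} w` with the points of the segment towards `w` gives
`(1 − t/2)‖prox_{γf} w − w‖² ≤ γℓ‖prox_{γf} w − w‖` for all `t ∈ (0, 1]`. Both `g_i` and the
average `g` are `L`-Lipschitz.
-/

open scoped RealInnerProductSpace

/-- Euclidean space ℝ^n. -/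
abbrev En (n : ℕ) := EuclideanSpace ℝ (Fin n)

/-- `G` is the proximal operator `prox_{γf}`: for every `z`, `G z` minimizes
`x ↦ (1/2)‖x − z‖² + γ f x` over `ℝ^n`. -/
def IsProx {n : ℕ} (γ : ℝ) (f : En n → ℝ) (G : En n → En n) : Prop :=
  ∀ z x : En n,
    (1 / 2 : ℝ) * ‖G z - z‖ ^ 2 + γ * f (G z) ≤ (1 / 2 : ℝ) * ‖x - z‖ ^ 2 + γ * f x

open Filter Topology

theorem nonneg_of_abs_sub_le_mul_norm {E : Type*} [NormedAddCommGroup E] [Nontrivial E]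
    {f : E → ℝ} {ℓ : ℝ} (hf : ∀ x y, |f x - f y| ≤ ℓ * ‖x - y‖) : 0 ≤ ℓ := by
  obtain ⟨x, hx⟩ := exists_ne (0 : E)
  have h := (abs_nonneg _).trans (hf x 0)
  rw [sub_zero] at h
  exact nonneg_of_mul_nonneg_left h (norm_pos_iff.2 hx)

theorem abs_average_sub_le {ι E : Type*} [Fintype ι] [Nonempty ι] [SeminormedAddCommGroup E]
    {g : ι → E → ℝ} {ℓ : ℝ} (hg : ∀ i x y, |g i x - g i y| ≤ ℓ * ‖x - y‖) (x y : E) :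
    |1 / (Fintype.card ι : ℝ) * ∑ i, g i x - 1 / (Fintype.card ι : ℝ) * ∑ i, g i y|
      ≤ ℓ * ‖x - y‖ := by
  have hcard : (0 : ℝ) < Fintype.card ι := by exact_mod_cast Fintype.card_pos
  calc _ = 1 / (Fintype.card ι : ℝ) * |∑ i, (g i x - g i y)| := by
        rw [← mul_sub, ← Finset.sum_sub_distrib, abs_mul, abs_of_pos (by positivity)]
    _ ≤ 1 / (Fintype.card ι : ℝ) * ∑ _i : ι, ℓ * ‖x - y‖ := by
        gcongr
        exact (Finset.abs_sum_le_sum_abs _ _).trans (Finset.sum_le_sum fun i _ => hg i x y)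
    _ = ℓ * ‖x - y‖ := by
        rw [Finset.sum_const, Finset.card_univ, nsmul_eq_mul]
        field_simp

namespace IsProx

variable {n : ℕ} {γ ℓ : ℝ} {f : En n → ℝ} {G : En n → En n}

theorem sq_norm_sub_le (hG : IsProx γ f G) (hγ : 0 ≤ γ)
    (hf : ∀ x y, |f x - f y| ≤ ℓ * ‖x - y‖) (w : En n) :
    ‖G w - w‖ ^ 2 ≤ γ * ℓ * ‖G w - w‖ := by
  set d := ‖G w - w‖
  have hsegment : ∀ t : ℝ, 0 < t → t ≤ 1 → (1 - t / 2) * d ^ 2 ≤ γ * ℓ * d := by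
    intro t ht₀ ht₁
    set y := G w + t • (w - G w)
    have hyw : ‖y - w‖ = (1 - t) * d := by
      rw [show y - w = (1 - t) • (G w - w) by module, norm_smul,
        Real.norm_of_nonneg (by linarith)]
    have hyG : ‖y - G w‖ = t * d := by
      rw [show y - G w = (-t) • (G w - w) by module, norm_smul, norm_neg,
        Real.norm_of_nonneg ht₀.le]
    have hfy : f y - f (G w) ≤ ℓ * (t * d) := hyG ▸ (le_abs_self _).trans (hf y (G w))
    have hmin := hG w y
    rw [hyw] at hmin
    refine le_of_mul_le_mul_left ?_ ht₀
    linarith [mul_le_mul_of_nonneg_left hfy hγ]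
  refine le_of_tendsto (x := 𝓝[>] 0) (f := fun t : ℝ => (1 - t / 2) * d ^ 2) ?_ ?_
  · have hcont : Continuous fun t : ℝ => (1 - t / 2) * d ^ 2 := by fun_prop
    simpa using (hcont.tendsto 0).mono_left nhdsWithin_le_nhds
  · filter_upwards [Ioc_mem_nhdsGT one_pos] with t ht using hsegment t ht.1 ht.2

theorem norm_sub_le (hG : IsProx γ f G) (hγ : 0 ≤ γ) (hℓ : 0 ≤ ℓ)
    (hf : ∀ x y, |f x - f y| ≤ ℓ * ‖x - y‖) (w : En n) :
    ‖G w - w‖ ≤ γ * ℓ := by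
  rcases (norm_nonneg (G w - w)).eq_or_lt with h | h
  · rw [← h]
    positivity
  · refine le_of_mul_le_mul_right ?_ h
    simpa only [sq] using hG.sq_norm_sub_le hγ hf w

end IsProx

theorem ipa_one_step_bound_general {n b : ℕ} (hn : 1 ≤ n)
    (γ : ℝ) (hγ : 0 < γ)
    (g : Fin b → En n → ℝ)
    (Lc : Fin b → ℝ)
    (hlip : ∀ i, ∀ x y : En n, |g i x - g i y| ≤ Lc i * ‖x - y‖)
    (L : ℝ) (hL : L = ⨆ i, Lc i)
    (D : En n → En n)
    (G : En n → En n) (hG : IsProx γ (fun x => (1 / (b : ℝ)) * ∑ i, g i x) G)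
    (Gi : Fin b → En n → En n) (hGi : ∀ i, IsProx γ (g i) (Gi i))
    (S : En n → En n) (hS : ∀ v : En n, S v = D v - G ((2 : ℝ) • D v - v))
    (vstar : En n) (hvstar : S vstar = 0)
    (xstar : En n) (hxstar : xstar = D vstar)
    (i : Fin b) (v : En n)
    (x z vplus : En n)
    (hz : z = Gi i ((2 : ℝ) • x - v)) (hvplus : vplus = v + z - x)
    (R : ℝ) (hR : ‖x - xstar‖ ≤ R) :
    ‖vplus - vstar‖ ≤ R + 2 * γ * L := by
  have : NeZero n := ⟨by omega⟩
  have : Nonempty (Fin b) := ⟨i⟩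
  have hlipL : ∀ j, ∀ x y : En n, |g j x - g j y| ≤ L * ‖x - y‖ := fun j x y =>
    (hlip j x y).trans <| mul_le_mul_of_nonneg_right
      (hL ▸ le_ciSup (Set.finite_range Lc).bddAbove j) (norm_nonneg _)
  have hL₀ : 0 ≤ L := nonneg_of_abs_sub_le_mul_norm (hlipL i)
  have hstep : ‖z - ((2 : ℝ) • x - v)‖ ≤ γ * L :=
    hz ▸ (hGi i).norm_sub_le hγ.le hL₀ (hlipL i) _
  have hfix : G ((2 : ℝ) • xstar - vstar) = xstar := by
    rw [hxstar]
    exact (sub_eq_zero.1 (hS vstar ▸ hvstar)).symm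
  have hstar : ‖xstar - ((2 : ℝ) • xstar - vstar)‖ ≤ γ * L := by
    have h := hG.norm_sub_le hγ.le hL₀
      (by simpa only [Fintype.card_fin] using abs_average_sub_le hlipL) ((2 : ℝ) • xstar - vstar)
    rwa [hfix] at h
  calc ‖vplus - vstar‖
      = ‖(x - xstar) + (z - ((2 : ℝ) • x - v)) - (xstar - ((2 : ℝ) • xstar - vstar))‖ := by
        rw [hvplus]
        congr 1
        module
    _ ≤ ‖x - xstar‖ + ‖z - ((2 : ℝ) • x - v)‖ + ‖xstar - ((2 : ℝ) • xstar - vstar)‖ :=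
        (norm_sub_le _ _).trans (by gcongr; exact norm_add_le _ _)
    _ ≤ R + 2 * γ * L := by linarith

/-- Boundedness of the IPA iterates (Lemma 2, one-step form). -/
theorem ipa_one_step_bound {n b : ℕ} (hn : 1 ≤ n) (hb : 1 ≤ b)
    (γ : ℝ) (hγ : 0 < γ)
    (g : Fin b → En n → ℝ)
    (hconv : ∀ i, ConvexOn ℝ Set.univ (g i))
    (Lc : Fin b → ℝ)
    (hlip : ∀ i, ∀ x y : En n, |g i x - g i y| ≤ Lc i * ‖x - y‖)
    (L : ℝ) (hL : L = ⨆ i, Lc i)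
    (D : En n → En n)
    (G : En n → En n) (hG : IsProx γ (fun x => (1 / (b : ℝ)) * ∑ i, g i x) G)
    (Gi : Fin b → En n → En n) (hGi : ∀ i, IsProx γ (g i) (Gi i))
    (S : En n → En n) (hS : ∀ v : En n, S v = D v - G ((2 : ℝ) • D v - v))
    (vstar : En n) (hvstar : S vstar = 0)
    (xstar : En n) (hxstar : xstar = D vstar)
    (i : Fin b) (v : En n)
    (x z vplus : En n)
    (hx : x = D v) (hz : z = Gi i ((2 : ℝ) • x - v)) (hvplus : vplus = v + z - x)
    (R : ℝ) (hR : ‖x - xstar‖ ≤ R) :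
    ‖vplus - vstar‖ ≤ R + 2 * γ * L :=
  ipa_one_step_bound_general hn γ hγ g Lc hlip L hL D G hG Gi hGi S hS vstar hvstar xstar hxstar i v
    x z vplus hz hvplus R hR
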